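/- For every γ > 0 there exists B₀ such that the following holds for every even integer B ≥ B₀. Let σ be a probability mass function on Fin B, let S* = { x ∈ Fin B : σ(x) ≤ B^{7γ−1} }, and assume σ(S*) ≥ 1/5. Let τ be a probability mass function on pair-selections, and let (s,t) be drawn from the product distribution σ × τ. Assume (i) Pr[s ∈ T(t)] ≤ 1/42, and (iii) the conditional entropy H(t | s), computed under σ × τ conditioned on the event s ∉ T(t), is at least B/2 − (1/840)·B^{1−7γ}. Define f*(t) = Σ_{x ∈ T(t) ∩ S*} σ(x). Then Pr_{t ∼ τ}[ f*(t) < 1/20 ] ≤ 1/2. -/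

import Mathlib

open Finset

/-- `memT t x` : the element `x ∈ Fin B` belongs to the set `T(t)` determined by the
pair-selection `t : Fin (B/2) → Bool`, namely `T(t) = { 2k + (if t k then 1 else 0) }`. -/
def memT {B : ℕ} (t : Fin (B / 2) → Bool) (x : Fin B) : Prop :=
  ∃ k : Fin (B / 2), (x : ℕ) = 2 * (k : ℕ) + (if t k then 1 else 0)

instance {B : ℕ} (t : Fin (B / 2) → Bool) (x : Fin B) : Decidable (memT t x) := by
  unfold memT; infer_instance

/-- The probability that `s ∈ T(t)` when `(s,t)` is drawn from the product `σ × τ`. -/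
noncomputable def prHit {B : ℕ} (σ : Fin B → ℝ) (τ : (Fin (B / 2) → Bool) → ℝ) : ℝ :=
  ∑ x : Fin B, ∑ t : Fin (B / 2) → Bool, if memT t x then σ x * τ t else 0

/-- The joint distribution `σ × τ` conditioned on the event `s ∉ T(t)`. -/
noncomputable def condJoint {B : ℕ} (σ : Fin B → ℝ) (τ : (Fin (B / 2) → Bool) → ℝ)
    (x : Fin B) (t : Fin (B / 2) → Bool) : ℝ :=
  (if memT t x then 0 else σ x * τ t) /
    ∑ x' : Fin B, ∑ t' : Fin (B / 2) → Bool, if memT t' x' then 0 else σ x' * τ t'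

/-- `H(s | t)`, in bits, under `σ × τ` conditioned on `s ∉ T(t)`:
`H(s | t) = ∑_t Pr[t] · H(s | t = t) = ∑_t ∑_x −p(x,t) · log₂ (p(x,t)/p(t))`. -/
noncomputable def condEntS {B : ℕ} (σ : Fin B → ℝ) (τ : (Fin (B / 2) → Bool) → ℝ) : ℝ :=
  ∑ t : Fin (B / 2) → Bool, ∑ x : Fin B,
    -(condJoint σ τ x t) *
      Real.logb 2 (condJoint σ τ x t / ∑ x' : Fin B, condJoint σ τ x' t)

/-- `H(t | s)`, in bits, under `σ × τ` conditioned on `s ∉ T(t)`. -/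
noncomputable def condEntT {B : ℕ} (σ : Fin B → ℝ) (τ : (Fin (B / 2) → Bool) → ℝ) : ℝ :=
  ∑ x : Fin B, ∑ t : Fin (B / 2) → Bool,
    -(condJoint σ τ x t) *
      Real.logb 2 (condJoint σ τ x t / ∑ t' : Fin (B / 2) → Bool, condJoint σ τ x t')

/-- `f*(t) = ∑_{x ∈ T(t) ∩ S*} σ(x)`, where `S* = { x : σ x ≤ c }`. -/
noncomputable def fstar {B : ℕ} (σ : Fin B → ℝ) (c : ℝ) (t : Fin (B / 2) → Bool) : ℝ :=
  ∑ x : Fin B, if memT t x ∧ σ x ≤ c then σ x else 0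

/-
Condition on `s ∉ T(t)`. Given `s = x`, the selection bit `t (x / 2)` is forced, so
`H(t | s) ≤ B/2 - 1`, and the entropy hypothesis forces `z := B^(1-7γ) ≥ 840`.
By a Chernoff bound over the independent choices in the `B/2` pairs, the selections `A` with
`f*(t) < 1/20` number at most `2^(B/2) · exp(-0.0132 z)`. Each of them misses at least `3/20`
of the mass of `σ`, so after conditioning `A` keeps at least `3/20` of its `τ`-mass. Splitting
`H(t | s = x)` into the part on `A` and the rest, if `τ(A) > 1/2` then `H(t | s)` drops below
`B/2 - z/840`.
-/

open Real

/-- `(∑ w) · H(w / ∑ w)` in bits: the entropy of the normalized weights, times their mass. -/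
noncomputable def scaledEntropy {ι : Type*} [Fintype ι] (w : ι → ℝ) : ℝ :=
  ∑ i, -w i * logb 2 (w i / ∑ j, w j)

lemma logb_natCast_nonneg (n : ℕ) : 0 ≤ logb 2 n :=
  div_nonneg (log_natCast_nonneg n) (log_nonneg one_le_two)

lemma logb_natCast_le_logb_natCast {m n : ℕ} (h : m ≤ n) : logb 2 m ≤ logb 2 n := by
  rcases m.eq_zero_or_pos with rfl | hm
  · simpa using logb_natCast_nonneg n
  · exact logb_le_logb_of_le one_lt_two (by exact_mod_cast hm) (by exact_mod_cast h)

lemma mul_logb_div_self (W : ℝ) : W * logb 2 (W / W) = 0 := by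
  rcases eq_or_ne W 0 with rfl | hW <;> simp [*]

lemma neg_mul_logb_div_le {w P W m : ℝ} (hw : 0 ≤ w) (hP : 0 < P) (hW : 0 < W) (hm : 0 < m) :
    -w * logb 2 (w / P) ≤ w * logb 2 m + w * logb 2 (P / W) + (W / m - w) / log 2 := by
  rcases hw.eq_or_lt with rfl | hw
  · simp only [neg_zero, zero_mul, sub_zero, zero_add]
    positivity
  have hgap : w * log (W / (m * w)) ≤ W / m - w := by
    calc w * log (W / (m * w)) ≤ w * (W / (m * w) - 1) :=
          mul_le_mul_of_nonneg_left (log_le_sub_one_of_pos (by positivity)) hw.le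
      _ = W / m - w := by field_simp
  have hsplit : -w * logb 2 (w / P) =
      w * logb 2 m + w * logb 2 (P / W) + w * log (W / (m * w)) / log 2 := by
    simp only [logb]
    rw [log_div hw.ne' hP.ne', log_div hP.ne' hW.ne', log_div hW.ne' (by positivity),
      log_mul hm.ne' hw.ne']
    ring
  rw [hsplit]
  gcongr

/-- Gibbs' inequality, for unnormalized weights and an arbitrary reference mass `P`. -/
lemma sum_neg_mul_logb_div_le {ι : Type*} (s : Finset ι) {w : ι → ℝ}
    (hw : ∀ i ∈ s, 0 ≤ w i) {P : ℝ} (hP : 0 ≤ P) :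
    ∑ i ∈ s, -w i * logb 2 (w i / P) ≤
      (∑ i ∈ s, w i) * logb 2 #s + (∑ i ∈ s, w i) * logb 2 (P / ∑ i ∈ s, w i) := by
  set W := ∑ i ∈ s, w i
  rcases (sum_nonneg hw).eq_or_lt with hW | hW
  · have hzero : ∀ i ∈ s, w i = 0 := (sum_eq_zero_iff_of_nonneg hw).1 hW.symm
    have hW0 : W = 0 := hW.symm
    rw [hW0, sum_eq_zero fun i hi => by rw [hzero i hi]; ring]
    simp
  rcases hP.eq_or_lt with rfl | hP
  · simp only [div_zero, zero_div, logb_zero, mul_zero, sum_const_zero, add_zero]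
    exact mul_nonneg hW.le (logb_natCast_nonneg _)
  have hs : (0 : ℝ) < #s := by exact_mod_cast card_pos.2 (nonempty_of_sum_ne_zero hW.ne')
  calc ∑ i ∈ s, -w i * logb 2 (w i / P)
      ≤ ∑ i ∈ s, (w i * logb 2 #s + w i * logb 2 (P / W) + (W / #s - w i) / log 2) :=
        sum_le_sum fun i hi => neg_mul_logb_div_le (hw i hi) hP hW hs
    _ = W * logb 2 #s + W * logb 2 (P / W) := by
        rw [sum_add_distrib, sum_add_distrib, ← sum_mul, ← sum_mul,
          ← sum_div, sum_sub_distrib, sum_const, nsmul_eq_mul,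
          mul_div_cancel₀ _ hs.ne', sub_self, zero_div, add_zero]

lemma mul_logb_div_add_mul_logb_div_le {u v : ℝ} (hu : 0 ≤ u) (hv : 0 ≤ v) :
    u * logb 2 ((u + v) / u) + v * logb 2 ((u + v) / v) ≤ u + v := by
  have h := sum_neg_mul_logb_div_le (univ : Finset Bool) (w := fun b => bif b then u else v)
    (by simp [hu, hv]) (add_nonneg hu hv)
  simp only [Fintype.sum_bool, cond_true, cond_false, card_univ, Fintype.card_bool,
    Nat.cast_ofNat, logb_self_eq_one one_lt_two, mul_one, mul_logb_div_self, add_zero] at h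
  simpa only [← inv_div _ (u + v), logb_inv, mul_neg, neg_mul] using h

lemma sum_eq_sum_add_sum_sdiff {ι M : Type*} [Fintype ι] [DecidableEq ι] [AddCommMonoid M]
    {f : ι → M} {s : Finset ι} (hf : ∀ i ∉ s, f i = 0) (a : Finset ι) :
    ∑ i, f i = ∑ i ∈ a, f i + ∑ i ∈ s \ a, f i := by
  rw [← sum_union disjoint_sdiff, union_sdiff_self_eq_union]
  exact (sum_subset (subset_univ _) fun i _ hi =>
    hf i fun his => hi (mem_union_right _ his)).symm

section scaledEntropy

variable {ι : Type*} [Fintype ι] {w : ι → ℝ} {s : Finset ι}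

lemma scaledEntropy_le (hw : ∀ i, 0 ≤ w i) (hs : ∀ i ∉ s, w i = 0) :
    scaledEntropy w ≤ (∑ i, w i) * logb 2 #s := by
  have hsum : ∑ i ∈ s, w i = ∑ i, w i :=
    sum_subset (subset_univ s) fun i _ hi => hs i hi
  have h := sum_neg_mul_logb_div_le s (fun i _ => hw i) (P := ∑ i, w i)
    (sum_nonneg fun i _ => hw i)
  rw [hsum, mul_logb_div_self, add_zero] at h
  refine le_of_eq_of_le (sum_subset (subset_univ s) fun i _ hi => ?_).symm h
  simp [hs i hi]

lemma scaledEntropy_le_of_split [DecidableEq ι] (hw : ∀ i, 0 ≤ w i) (hs : ∀ i ∉ s, w i = 0)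
    (a : Finset ι) :
    scaledEntropy w ≤ (∑ i ∈ a, w i) * logb 2 #a +
      (∑ i, w i - ∑ i ∈ a, w i) * logb 2 #s + ∑ i, w i := by
  set P := ∑ i, w i
  have hP : P = ∑ i ∈ a, w i + ∑ i ∈ s \ a, w i := sum_eq_sum_add_sum_sdiff hs a
  have hP0 : 0 ≤ P := sum_nonneg fun i _ => hw i
  have hv : 0 ≤ ∑ i ∈ s \ a, w i := sum_nonneg fun i _ => hw i
  have hentropy : scaledEntropy w = ∑ i ∈ a, -w i * logb 2 (w i / P) +
      ∑ i ∈ s \ a, -w i * logb 2 (w i / P) :=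
    sum_eq_sum_add_sum_sdiff (fun i hi => by simp [hs i hi]) a
  have ha := sum_neg_mul_logb_div_le a (fun i _ => hw i) hP0
  have hsa := sum_neg_mul_logb_div_le (s \ a) (fun i _ => hw i) hP0
  have hcard := mul_le_mul_of_nonneg_left
    (logb_natCast_le_logb_natCast (card_le_card (sdiff_subset (s := s) (t := a)))) hv
  have hbin := mul_logb_div_add_mul_logb_div_le (sum_nonneg fun i (_ : i ∈ a) => hw i) hv
  rw [← hP] at hbin
  have hcoeff : P - ∑ i ∈ a, w i = ∑ i ∈ s \ a, w i := by rw [hP, add_sub_cancel_left]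
  rw [hentropy, hcoeff]
  linarith

end scaledEntropy

lemma exp_neg_le_one_sub_mul {x : ℝ} (hx0 : 0 ≤ x) (hx1 : x ≤ 1) :
    exp (-x) ≤ 1 - (1 - exp (-1)) * x := by
  have h := convexOn_exp.2 (Set.mem_univ (-1)) (Set.mem_univ 0) hx0 (sub_nonneg.2 hx1)
    (add_sub_cancel x 1)
  simp only [smul_eq_mul, mul_neg, mul_one, mul_zero, add_zero, exp_zero] at h
  linarith

lemma exp_neg_add_exp_neg_le {x y : ℝ} (hx0 : 0 ≤ x) (hx1 : x ≤ 1) (hy0 : 0 ≤ y)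
    (hy1 : y ≤ 1) :
    exp (-x) + exp (-y) ≤ 2 * exp (-((1 - exp (-1)) * (x + y) / 2)) := by
  have := add_one_le_exp (-((1 - exp (-1)) * (x + y) / 2))
  linarith [exp_neg_le_one_sub_mul hx0 hx1, exp_neg_le_one_sub_mul hy0 hy1]

/-- Chernoff's exponential-moment bound for choosing one weight out of each pair. -/
lemma card_filter_sum_lt_le {κ : Type*} [Fintype κ] [DecidableEq κ] (w : κ → Bool → ℝ)
    {a c m : ℝ} (hc : 0 < c) (hw0 : ∀ k b, 0 ≤ w k b) (hwc : ∀ k b, w k b ≤ c)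
    (hm : m ≤ ∑ k, ∑ b, w k b) :
    (#{t : κ → Bool | ∑ k, w k (t k) < a} : ℝ) ≤
      2 ^ Fintype.card κ * exp ((a - (1 - exp (-1)) / 2 * m) / c) := by
  have he : 0 ≤ 1 - exp (-1) := sub_nonneg.2 (exp_le_one_iff.2 (by norm_num))
  calc (#{t : κ → Bool | ∑ k, w k (t k) < a} : ℝ)
      ≤ ∑ t : κ → Bool, exp ((a - ∑ k, w k (t k)) / c) := by
        rw [natCast_card_filter]
        gcongr with t
        split_ifs with h
        · exact one_le_exp (div_nonneg (sub_nonneg.2 h.le) hc.le)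
        · positivity
    _ = exp (a / c) * ∏ k, ∑ b, exp (-(w k b / c)) := by
        rw [Fintype.prod_sum, mul_sum]
        refine Fintype.sum_congr _ _ fun t => ?_
        rw [← exp_sum, ← exp_add, sum_neg_distrib, ← sum_div, sub_div, sub_eq_add_neg]
    _ ≤ exp (a / c) *
          ∏ k, 2 * exp (-((1 - exp (-1)) * (w k true / c + w k false / c) / 2)) := by
        gcongr with k
        rw [Fintype.sum_bool]
        exact exp_neg_add_exp_neg_le (div_nonneg (hw0 k true) hc.le)
          ((div_le_one hc).2 (hwc k true)) (div_nonneg (hw0 k false) hc.le)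
          ((div_le_one hc).2 (hwc k false))
    _ = 2 ^ Fintype.card κ * exp ((a - (1 - exp (-1)) / 2 * ∑ k, ∑ b, w k b) / c) := by
        rw [prod_mul_distrib, prod_const, card_univ, ← exp_sum, mul_left_comm,
          ← exp_add]
        simp only [Fintype.sum_bool]
        congr 2
        rw [mul_sum, sub_div, sum_div, sub_eq_add_neg (a / c), ← sum_neg_distrib]
        exact congrArg _ (sum_congr rfl fun k _ => by ring)
    _ ≤ 2 ^ Fintype.card κ * exp ((a - (1 - exp (-1)) / 2 * m) / c) := by
        gcongr

lemma chernoff_exponent_div_log_two_le :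
    (1 / 20 - (1 - exp (-1)) / 2 * (1 / 5)) / log 2 ≤ -0.018 := by
  have he : exp (-1) < 0.368 := by
    rw [exp_neg, inv_lt_comm₀ (exp_pos 1) (by norm_num)]
    linarith [exp_one_gt_d9]
  rw [div_le_iff₀ (log_pos one_lt_two)]
  linarith [log_two_lt_d9]

def pairEquiv {B : ℕ} (hB : 2 ∣ B) : Fin (B / 2) × Bool ≃ Fin B where
  toFun p := ⟨2 * p.1 + if p.2 then 1 else 0, by have := p.1.isLt; split <;> omega⟩
  invFun x := (⟨x / 2, by omega⟩, x.val % 2 = 1)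
  left_inv := by
    rintro ⟨k, _ | _⟩
    · simp
    · simp [Prod.ext_iff, Fin.ext_iff]; omega
  right_inv x := by
    ext
    by_cases h : x.val % 2 = 1 <;> simp [h] <;> omega

lemma memT_pairEquiv {B : ℕ} (hB : 2 ∣ B) (t : Fin (B / 2) → Bool) (k : Fin (B / 2))
    (b : Bool) :
    memT t (pairEquiv hB (k, b)) ↔ t k = b := by
  refine ⟨fun ⟨k', hk'⟩ => ?_, fun h => ⟨k, by simp [pairEquiv, h]⟩⟩
  have hk : k' = k := by
    ext
    simp only [pairEquiv, Equiv.coe_fn_mk] at hk'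
    split at hk' <;> split at hk' <;> omega
  subst hk
  simp only [pairEquiv, Equiv.coe_fn_mk] at hk'
  revert hk'
  cases b <;> cases t k' <;> simp

lemma card_filter_not_memT {B : ℕ} (hB : 2 ∣ B) (x : Fin B) :
    #{t : Fin (B / 2) → Bool | ¬memT t x} = 2 ^ (B / 2 - 1) := by
  obtain ⟨⟨k, b⟩, rfl⟩ := (pairEquiv hB).surjective x
  have h := Fintype.card_filter_piFinset_const_eq_of_mem (univ : Finset Bool) k
    (mem_univ !b)
  rw [Fintype.piFinset_univ, card_univ, Fintype.card_bool, Fintype.card_fin] at h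
  convert h using 3 with t
  rw [memT_pairEquiv, Bool.eq_not]

lemma logb_card_filter_not_memT {B : ℕ} (hB : 2 ∣ B) (x : Fin B) :
    logb 2 #{t : Fin (B / 2) → Bool | ¬memT t x} = ((B / 2 : ℕ) : ℝ) - 1 := by
  have hpos : 1 ≤ B / 2 := by have := x.isLt; omega
  rw [card_filter_not_memT hB, Nat.cast_pow, Nat.cast_ofNat, logb_pow,
    logb_self_eq_one one_lt_two, mul_one, Nat.cast_sub hpos, Nat.cast_one]

section Selection

variable {B : ℕ} {σ : Fin B → ℝ} {τ : (Fin (B / 2) → Bool) → ℝ}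

/-- `Pr[s ∉ T(t)]`, the normalizing constant of `condJoint`. -/
noncomputable def missProb (σ : Fin B → ℝ) (τ : (Fin (B / 2) → Bool) → ℝ) : ℝ :=
  ∑ x : Fin B, ∑ t : Fin (B / 2) → Bool, if memT t x then 0 else σ x * τ t

lemma condJoint_eq (x : Fin B) (t : Fin (B / 2) → Bool) :
    condJoint σ τ x t = (if memT t x then 0 else σ x * τ t) / missProb σ τ :=
  rfl

lemma missProb_add_prHit (hσ1 : ∑ x, σ x = 1) (hτ1 : ∑ t, τ t = 1) :
    missProb σ τ + prHit σ τ = 1 := by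
  have h1 : (∑ x, σ x) * ∑ t, τ t = 1 := by rw [hσ1, hτ1, one_mul]
  rw [missProb, prHit, ← sum_add_distrib, ← h1, sum_mul_sum]
  refine sum_congr rfl fun x _ => ?_
  rw [← sum_add_distrib]
  exact sum_congr rfl fun t _ => by split_ifs <;> simp

lemma prHit_nonneg (hσ0 : ∀ x, 0 ≤ σ x) (hτ0 : ∀ t, 0 ≤ τ t) : 0 ≤ prHit σ τ :=
  sum_nonneg fun x _ => sum_nonneg fun t _ => by
    split_ifs
    exacts [mul_nonneg (hσ0 x) (hτ0 t), le_rfl]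

lemma condJoint_nonneg (hσ0 : ∀ x, 0 ≤ σ x) (hτ0 : ∀ t, 0 ≤ τ t)
    (hZ : 0 ≤ missProb σ τ) (x : Fin B) (t : Fin (B / 2) → Bool) :
    0 ≤ condJoint σ τ x t := by
  rw [condJoint_eq]
  split_ifs
  exacts [by simp, div_nonneg (mul_nonneg (hσ0 x) (hτ0 t)) hZ]

lemma condJoint_of_memT {x : Fin B} {t : Fin (B / 2) → Bool} (h : memT t x) :
    condJoint σ τ x t = 0 := by
  rw [condJoint_eq, if_pos h, zero_div]

lemma sum_condJoint (hZ : missProb σ τ ≠ 0) : ∑ x, ∑ t, condJoint σ τ x t = 1 := by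
  simp only [condJoint_eq, ← sum_div]
  exact div_self hZ

lemma three_twentieths_le_sum_not_memT (hσ0 : ∀ x, 0 ≤ σ x) {c : ℝ}
    (hS : 1 / 5 ≤ ∑ x, if σ x ≤ c then σ x else 0) {t : Fin (B / 2) → Bool}
    (ht : fstar σ c t < 1 / 20) :
    3 / 20 ≤ ∑ x, if memT t x then 0 else σ x := by
  have hsplit : (∑ x, if σ x ≤ c then σ x else 0) ≤
      (∑ x, if memT t x then 0 else σ x) + fstar σ c t := by
    rw [fstar, ← sum_add_distrib]
    refine sum_le_sum fun x _ => ?_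
    split_ifs <;> simp_all
  linarith

lemma three_twentieths_mul_le_sum_condJoint (hσ0 : ∀ x, 0 ≤ σ x) (hσ1 : ∑ x, σ x = 1)
    (hτ0 : ∀ t, 0 ≤ τ t) (hτ1 : ∑ t, τ t = 1) (hZ : 0 < missProb σ τ) {c : ℝ}
    (hS : 1 / 5 ≤ ∑ x, if σ x ≤ c then σ x else 0) {t : Fin (B / 2) → Bool}
    (ht : fstar σ c t < 1 / 20) :
    3 / 20 * τ t ≤ ∑ x, condJoint σ τ x t := by
  have hZ1 : missProb σ τ ≤ 1 := by
    linarith [missProb_add_prHit (σ := σ) (τ := τ) hσ1 hτ1, prHit_nonneg hσ0 hτ0]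
  have hmiss := three_twentieths_le_sum_not_memT hσ0 hS ht
  have hmarg : ∑ x, condJoint σ τ x t =
      (∑ x, if memT t x then 0 else σ x) * τ t / missProb σ τ := by
    simp only [condJoint_eq, ← sum_div, sum_mul, ite_mul, zero_mul]
  rw [hmarg]
  calc 3 / 20 * τ t ≤ (∑ x, if memT t x then 0 else σ x) * τ t :=
        mul_le_mul_of_nonneg_right hmiss (hτ0 t)
    _ ≤ _ := le_div_self (mul_nonneg (by linarith) (hτ0 t)) hZ hZ1

lemma condEntT_eq_sum_scaledEntropy :
    condEntT σ τ = ∑ x, scaledEntropy (condJoint σ τ x) :=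
  rfl

lemma condEntT_le (hB : 2 ∣ B) (hσ0 : ∀ x, 0 ≤ σ x) (hτ0 : ∀ t, 0 ≤ τ t)
    (hZ : 0 < missProb σ τ) :
    condEntT σ τ ≤ ((B / 2 : ℕ) : ℝ) - 1 := by
  rw [condEntT_eq_sum_scaledEntropy]
  calc ∑ x, scaledEntropy (condJoint σ τ x)
      ≤ ∑ x, (∑ t, condJoint σ τ x t) * (((B / 2 : ℕ) : ℝ) - 1) := by
        refine sum_le_sum fun x _ => ?_
        rw [← logb_card_filter_not_memT hB x]
        exact scaledEntropy_le (condJoint_nonneg hσ0 hτ0 hZ.le x)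
          fun t ht => condJoint_of_memT (by simpa using ht)
    _ = ((B / 2 : ℕ) : ℝ) - 1 := by rw [← sum_mul, sum_condJoint hZ.ne', one_mul]

lemma condEntT_le_of_split (hB : 2 ∣ B) (hσ0 : ∀ x, 0 ≤ σ x) (hτ0 : ∀ t, 0 ≤ τ t)
    (hZ : 0 < missProb σ τ) (a : Finset (Fin (B / 2) → Bool)) :
    condEntT σ τ ≤ (∑ x, ∑ t ∈ a, condJoint σ τ x t) * logb 2 #a +
      (1 - ∑ x, ∑ t ∈ a, condJoint σ τ x t) * (((B / 2 : ℕ) : ℝ) - 1) + 1 := by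
  rw [condEntT_eq_sum_scaledEntropy]
  calc ∑ x, scaledEntropy (condJoint σ τ x)
      ≤ ∑ x, ((∑ t ∈ a, condJoint σ τ x t) * logb 2 #a +
          (∑ t, condJoint σ τ x t - ∑ t ∈ a, condJoint σ τ x t) *
            (((B / 2 : ℕ) : ℝ) - 1) +
          ∑ t, condJoint σ τ x t) := by
        refine sum_le_sum fun x _ => ?_
        rw [← logb_card_filter_not_memT hB x]
        exact scaledEntropy_le_of_split (condJoint_nonneg hσ0 hτ0 hZ.le x)
          (fun t ht => condJoint_of_memT (by simpa using ht)) a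
    _ = _ := by
        rw [sum_add_distrib, sum_add_distrib, ← sum_mul, ← sum_mul,
          sum_sub_distrib, sum_condJoint hZ.ne']

lemma fstar_eq_sum (hB : 2 ∣ B) (c : ℝ) (t : Fin (B / 2) → Bool) :
    fstar σ c t =
      ∑ k, if σ (pairEquiv hB (k, t k)) ≤ c then σ (pairEquiv hB (k, t k)) else 0 := by
  rw [fstar, ← (pairEquiv hB).sum_comp, Fintype.sum_prod_type]
  refine Fintype.sum_congr _ _ fun k => ?_
  simp only [memT_pairEquiv, ite_and]
  exact Fintype.sum_ite_eq (t k) fun b =>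
    if σ (pairEquiv hB (k, b)) ≤ c then σ (pairEquiv hB (k, b)) else 0

lemma card_fstar_lt_le (hB : 2 ∣ B) (hσ0 : ∀ x, 0 ≤ σ x) {c : ℝ} (hc : 0 < c)
    (hS : 1 / 5 ≤ ∑ x, if σ x ≤ c then σ x else 0) :
    (#{t : Fin (B / 2) → Bool | fstar σ c t < 1 / 20} : ℝ) ≤
      2 ^ (B / 2) * exp ((1 / 20 - (1 - exp (-1)) / 2 * (1 / 5)) / c) := by
  set w : Fin (B / 2) → Bool → ℝ := fun k b =>
    if σ (pairEquiv hB (k, b)) ≤ c then σ (pairEquiv hB (k, b)) else 0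
  have hm : 1 / 5 ≤ ∑ k, ∑ b, w k b := by
    rwa [← Fintype.sum_prod_type (f := fun p => w p.1 p.2), (pairEquiv hB).sum_comp
      (fun x => if σ x ≤ c then σ x else 0)]
  have hw0 : ∀ k b, 0 ≤ w k b := fun k b => by
    simp only [w]
    split_ifs
    exacts [hσ0 _, le_rfl]
  have hwc : ∀ k b, w k b ≤ c := fun k b => by
    simp only [w]
    split_ifs with h
    exacts [h, hc.le]
  simpa [fstar_eq_sum hB] using card_filter_sum_lt_le w (a := 1 / 20) hc hw0 hwc hm

lemma logb_card_fstar_lt_le (hB : 2 ∣ B) (hσ0 : ∀ x, 0 ≤ σ x) {c : ℝ} (hc : 0 < c)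
    (hS : 1 / 5 ≤ ∑ x, if σ x ≤ c then σ x else 0)
    (hA : ({t | fstar σ c t < 1 / 20} : Finset (Fin (B / 2) → Bool)).Nonempty) :
    logb 2 #{t : Fin (B / 2) → Bool | fstar σ c t < 1 / 20} ≤
      (B / 2 : ℕ) - 0.018 * c⁻¹ := by
  have hy := chernoff_exponent_div_log_two_le
  set y := 1 / 20 - (1 - exp (-1)) / 2 * (1 / 5)
  calc logb 2 #{t : Fin (B / 2) → Bool | fstar σ c t < 1 / 20}
      ≤ logb 2 (2 ^ (B / 2) * exp (y / c)) :=
        logb_le_logb_of_le one_lt_two (by exact_mod_cast hA.card_pos)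
          (card_fstar_lt_le hB hσ0 hc hS)
    _ = (B / 2 : ℕ) + y / log 2 * c⁻¹ := by
        rw [logb_mul (by positivity) (exp_pos _).ne', logb_pow, logb_self_eq_one one_lt_two,
          mul_one, logb, log_exp]
        ring
    _ ≤ (B / 2 : ℕ) - 0.018 * c⁻¹ := by
        nlinarith [mul_le_mul_of_nonneg_right hy (inv_nonneg.2 hc.le)]

theorem sum_fstar_lt_le_half (hB : 2 ∣ B) (hσ0 : ∀ x, 0 ≤ σ x) (hσ1 : ∑ x, σ x = 1)
    (hτ0 : ∀ t, 0 ≤ τ t) (hτ1 : ∑ t, τ t = 1) {c : ℝ} (hc : 0 < c)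
    (hS : 1 / 5 ≤ ∑ x, if σ x ≤ c then σ x else 0) (hHit : prHit σ τ ≤ 1 / 42)
    (hEnt : (B : ℝ) / 2 - 1 / 840 * c⁻¹ ≤ condEntT σ τ) :
    (∑ t, if fstar σ c t < 1 / 20 then τ t else 0) ≤ 1 / 2 := by
  rw [← sum_filter]
  set A : Finset (Fin (B / 2) → Bool) := {t | fstar σ c t < 1 / 20}
  rcases A.eq_empty_or_nonempty with hA | hA
  · rw [hA, sum_empty]
    norm_num
  have hZ : 0 < missProb σ τ := by linarith [missProb_add_prHit (σ := σ) (τ := τ) hσ1 hτ1]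
  set U := ∑ x, ∑ t ∈ A, condJoint σ τ x t
  have hU0 : 0 ≤ U :=
    sum_nonneg fun x _ => sum_nonneg fun t _ => condJoint_nonneg hσ0 hτ0 hZ.le x t
  have hU : 3 / 20 * ∑ t ∈ A, τ t ≤ U := by
    rw [mul_sum]
    exact (sum_le_sum fun t ht => three_twentieths_mul_le_sum_condJoint hσ0 hσ1 hτ0 hτ1 hZ hS
      (mem_filter.1 ht).2).trans_eq sum_comm
  have hn : ((B / 2 : ℕ) : ℝ) = B / 2 := by
    rw [Nat.cast_div hB two_ne_zero, Nat.cast_ofNat]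
  have hH := condEntT_le hB hσ0 hτ0 hZ
  have hHsplit := condEntT_le_of_split hB hσ0 hτ0 hZ A
  have hLA := logb_card_fstar_lt_le hB hσ0 hc hS hA
  rw [hn] at hH hHsplit hLA
  -- With `z = c⁻¹`: the entropy bounds give `z ≥ 840` and `U (0.018 z - 1) ≤ z / 840`,
  -- which `U > 3 / 40` rules out.
  have hz : 840 ≤ c⁻¹ := by linarith
  by_contra! hbig
  nlinarith [mul_le_mul_of_nonneg_left hLA hU0,
    mul_nonneg (by linarith : 0 ≤ U - 3 / 40) (by linarith : 0 ≤ 0.018 * c⁻¹ - 1)]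

end Selection

theorem stmt2_general (γ : ℝ) :
    ∃ B₀ : ℕ, ∀ B : ℕ, B₀ ≤ B → 2 ∣ B →
      ∀ σ : Fin B → ℝ, (∀ x, 0 ≤ σ x) → (∑ x, σ x) = 1 →
      -- σ assigns mass at least 1/5 to S* = { x : σ x ≤ B^(7γ−1) }
      (1 / 5 ≤ ∑ x : Fin B, if σ x ≤ (B : ℝ) ^ (7 * γ - 1) then σ x else 0) →
      ∀ τ : (Fin (B / 2) → Bool) → ℝ, (∀ t, 0 ≤ τ t) → (∑ t, τ t) = 1 →
      prHit σ τ ≤ 1 / 42 →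
      (B : ℝ) / 2 - (1 / 840) * (B : ℝ) ^ ((1 : ℝ) - 7 * γ) ≤ condEntT σ τ →
      (∑ t : Fin (B / 2) → Bool,
          if fstar σ ((B : ℝ) ^ (7 * γ - 1)) t < 1 / 20 then τ t else 0) ≤ 1 / 2 := by
  refine ⟨0, fun B _ hB σ hσ0 hσ1 hS τ hτ0 hτ1 hHit hEnt => ?_⟩
  have hBpos : (0 : ℝ) < B := by
    rcases Nat.eq_zero_or_pos B with rfl | hB0
    · simp at hσ1
    · exact_mod_cast hB0
  have hexp : (B : ℝ) ^ ((1 : ℝ) - 7 * γ) = ((B : ℝ) ^ (7 * γ - 1))⁻¹ := by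
    rw [← rpow_neg hBpos.le, neg_sub]
  rw [hexp] at hEnt
  exact sum_fstar_lt_le_half hB hσ0 hσ1 hτ0 hτ1 (rpow_pos_of_pos hBpos _) hS hHit hEnt

theorem stmt2 (γ : ℝ) (hγ : 0 < γ) :
    ∃ B₀ : ℕ, ∀ B : ℕ, B₀ ≤ B → 2 ∣ B →
      ∀ σ : Fin B → ℝ, (∀ x, 0 ≤ σ x) → (∑ x, σ x) = 1 →
      -- σ assigns mass at least 1/5 to S* = { x : σ x ≤ B^(7γ−1) }
      (1 / 5 ≤ ∑ x : Fin B, if σ x ≤ (B : ℝ) ^ (7 * γ - 1) then σ x else 0) →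
      ∀ τ : (Fin (B / 2) → Bool) → ℝ, (∀ t, 0 ≤ τ t) → (∑ t, τ t) = 1 →
      prHit σ τ ≤ 1 / 42 →
      (B : ℝ) / 2 - (1 / 840) * (B : ℝ) ^ ((1 : ℝ) - 7 * γ) ≤ condEntT σ τ →
      (∑ t : Fin (B / 2) → Bool,
          if fstar σ ((B : ℝ) ^ (7 * γ - 1)) t < 1 / 20 then τ t else 0) ≤ 1 / 2 :=
  stmt2_general γ
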